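/- Local-global principle: for every positive formula φ of ℒ^□, the formula (φ ∗ ⊤) → φ is valid: whenever f,𝒱,x ⊨ φ ∗ ⊤, then f,𝒱,x ⊨ φ. -/

import Mathlib

/-- A system: a set of behaviours `B` together with a map into component snapshots. -/
structure System (Comp : Type) (Beh : Comp → Type) where
  B : Type
  C : Set Comp
  f : B → (c : Comp) → c ∈ C → Beh c

variable {Comp : Type} {Beh : Comp → Type}

/-- `σ` is an implementation of `g` in `f`: `Comp(g) ⊆ Comp(f)` and `f_{Comp(g)} = g ∘ σ`. -/
def Implements (f g : System Comp Beh) (σ : f.B → g.B) : Prop :=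
  g.C ⊆ f.C ∧ ∀ (b : f.B) (c : Comp) (hg : c ∈ g.C) (hf : c ∈ f.C),
    f.f b c hf = g.f (σ b) c hg
/-- `(x,y)` is compatible: the interface is empty or `f_I(x) = g_I(y)`. -/
def Compatible (f g : System Comp Beh) (x : f.B) (y : g.B) : Prop :=
  f.C ∩ g.C = ∅ ∨
    ∀ (c : Comp) (hf : c ∈ f.C) (hg : c ∈ g.C), f.f x c hf = g.f y c hg

open Classical in
/-- The canonical free composition `f ⊗ g`. -/
noncomputable def tensor (f g : System Comp Beh) : System Comp Beh where
  B := {p : f.B × g.B // Compatible f g p.1 p.2}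
  C := f.C ∪ g.C
  f := fun p c hc =>
    if hf : c ∈ f.C then f.f p.val.1 c hf
    else g.f p.val.2 c (Or.resolve_left hc hf)
/-- Systems are equivalent if each implements the other. -/
def SysEquiv (f g : System Comp Beh) : Prop :=
  (∃ σ : f.B → g.B, Implements f g σ) ∧ (∃ τ : g.B → f.B, Implements g f τ)

/-- `(f,x) = (f₁,x₁) ⊗ (f₂,x₂)`: `f ≡ f₁ ⊗ f₂` and the behaviour `x` agrees
with `x₁` on `Comp(f₁)` and with `x₂` on `Comp(f₂)`. -/
def Decomp (f : System Comp Beh) (x : f.B)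
    (f1 : System Comp Beh) (x1 : f1.B)
    (f2 : System Comp Beh) (x2 : f2.B) : Prop :=
  SysEquiv f (tensor f1 f2) ∧
  (∀ (c : Comp) (hc1 : c ∈ f1.C) (hcf : c ∈ f.C), f.f x c hcf = f1.f x1 c hc1) ∧
  (∀ (c : Comp) (hc2 : c ∈ f2.C) (hcf : c ∈ f.C), f.f x c hcf = f2.f x2 c hc2)

/-- Formulas of the logic `ℒ*` : atoms, ∧, ¬, □, ⊤ and the multiplicative
conjunction ∗. -/
inductive Fml (Comp : Type) (Var : Comp → Type) : Type
  | atom (c : Comp) (p : Var c)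
  | and (φ ψ : Fml Comp Var)
  | not (φ : Fml Comp Var)
  | box (φ : Fml Comp Var)
  | top
  | star (φ ψ : Fml Comp Var)

variable {Var : Comp → Type}

/-- The formula only uses atoms over the components in `C`. -/
def InLogic (C : Set Comp) : Fml Comp Var → Prop
  | .atom c _ => c ∈ C
  | .and φ ψ => InLogic C φ ∧ InLogic C ψ
  | .not φ => InLogic C φ
  | .box φ => InLogic C φ
  | .top => True
  | .star φ ψ => InLogic C φ ∧ InLogic C ψ

/-- Satisfaction for `ℒ*`; in the clause for `∗`, the decomposed formulas are
required to be in the logic of the respective subsystem. -/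
def Sat (V : (c : Comp) → Var c → Set (Beh c)) :
    (f : System Comp Beh) → f.B → Fml Comp Var → Prop
  | f, x, .atom c p => ∃ hc : c ∈ f.C, f.f x c hc ∈ V c p
  | f, x, .and φ ψ => Sat V f x φ ∧ Sat V f x ψ
  | f, x, .not φ => ¬ Sat V f x φ
  | f, _, .box φ => ∀ y : f.B, Sat V f y φ
  | _, _, .top => True
  | f, x, .star φ ψ => ∃ (f1 f2 : System Comp Beh) (x1 : f1.B) (x2 : f2.B),
      Decomp f x f1 x1 f2 x2 ∧ InLogic f1.C φ ∧ InLogic f2.C ψ ∧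
      Sat V f1 x1 φ ∧ Sat V f2 x2 ψ

/-- The formula belongs to `ℒ^□`: it contains no `∗` and no `⊤`. -/
def NoStar : Fml Comp Var → Prop
  | .atom _ _ => True
  | .and φ ψ => NoStar φ ∧ NoStar ψ
  | .not φ => NoStar φ
  | .box φ => NoStar φ
  | .top => False
  | .star _ _ => False

mutual
  /-- Positive: no `□` in the scope of an odd number of `¬`. -/
  def PosFml : Fml Comp Var → Prop
    | .atom _ _ => True
    | .and φ ψ => PosFml φ ∧ PosFml ψ
    | .not φ => NegFml φ
    | .box φ => PosFml φ
    | .top => True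
    | .star φ ψ => PosFml φ ∧ PosFml ψ
  /-- Negative: no `□` in the scope of an even number of `¬`. -/
  def NegFml : Fml Comp Var → Prop
    | .atom _ _ => True
    | .and φ ψ => NegFml φ ∧ NegFml ψ
    | .not φ => PosFml φ
    | .box _ => False
    | .top => True
    | .star φ ψ => NegFml φ ∧ NegFml ψ
end

theorem Implements.trans {f g h : System Comp Beh} {σ : f.B → g.B} {τ : g.B → h.B}
    (hσ : Implements f g σ) (hτ : Implements g h τ) : Implements f h (τ ∘ σ) :=
  ⟨hτ.1.trans hσ.1, fun b c hh hf => (hσ.2 b c (hτ.1 hh) hf).trans (hτ.2 (σ b) c hh _)⟩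

theorem implements_tensor_left (f g : System Comp Beh) :
    Implements (tensor f g) f (fun p => p.val.1) :=
  ⟨Set.subset_union_left, fun _ _ hc _ => dif_pos hc⟩

/- Directed absoluteness: along an implementation `σ` of `g` in `f`, snapshots of `g` are
snapshots of `f`, so atoms and `∧` transfer both ways, `¬` swaps the two directions, and a
`□` (allowed only positively) over all of `f.B` is witnessed in `g` at the image under `σ`. -/
theorem Implements.sat_transfer (V : (c : Comp) → Var c → Set (Beh c))
    {f g : System Comp Beh} {σ : f.B → g.B} (hσ : Implements f g σ)
    {φ : Fml Comp Var} (hφ : NoStar φ) (hin : InLogic g.C φ) {x : f.B} {y : g.B}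
    (hxy : ∀ (c : Comp) (hg : c ∈ g.C) (hf : c ∈ f.C), f.f x c hf = g.f y c hg) :
    (PosFml φ → Sat V g y φ → Sat V f x φ) ∧ (NegFml φ → Sat V f x φ → Sat V g y φ) := by
  induction φ generalizing x y with
  | atom c p =>
    refine ⟨fun _ ⟨hg, hv⟩ => ⟨hσ.1 hg, ?_⟩, fun _ ⟨hf, hv⟩ => ⟨hin, ?_⟩⟩
    · rwa [hxy c hg]
    · rwa [← hxy c hin hf]
  | and φ ψ ihφ ihψ =>
    have hφ' := ihφ hφ.1 hin.1 hxy
    have hψ' := ihψ hφ.2 hin.2 hxy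
    exact ⟨fun hp hs => ⟨hφ'.1 hp.1 hs.1, hψ'.1 hp.2 hs.2⟩,
      fun hn hs => ⟨hφ'.2 hn.1 hs.1, hψ'.2 hn.2 hs.2⟩⟩
  | not φ ih =>
    have h := ih hφ hin hxy
    exact ⟨fun hn hs hs' => hs (h.2 hn hs'), fun hp hs hs' => hs (h.1 hp hs')⟩
  | box φ ih =>
    refine ⟨fun hp hs z => (ih hφ hin (hσ.2 z)).1 hp (hs (σ z)), fun hn => ?_⟩
    exact absurd hn (by simp [NegFml])
  | top => exact ⟨fun _ _ => trivial, fun _ _ => trivial⟩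
  | star => exact absurd hφ (by simp [NoStar])

/-- local-global principle: for every positive formula `φ` of
`ℒ^□`, the formula `(φ ∗ ⊤) → φ` is valid. -/
theorem local_global (V : (c : Comp) → Var c → Set (Beh c))
    (f : System Comp Beh) (x : f.B)
    (φ : Fml Comp Var) (hφ : NoStar φ) (hpos : PosFml φ)
    (hsat : Sat V f x (Fml.star φ Fml.top)) :
    Sat V f x φ := by
  obtain ⟨f1, f2, x1, -, ⟨⟨⟨σ, hσ⟩, -⟩, hx1, -⟩, hin, -, hsat1, -⟩ := hsat
  have himpl : Implements f f1 ((fun p => p.val.1) ∘ σ) :=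
    hσ.trans (implements_tensor_left f1 f2)
  exact (himpl.sat_transfer V hφ hin hx1).1 hpos hsat1
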